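/- arXiv:1211.4048 — 3 statements merged into one kernel-verified Lean document; each statement's English description precedes it below -/
import Mathlib

section
/- Let l > -1/2 and let K_l(r,s) = (2l+1)^{-1} min(r,s)^{l+1} max(r,s)^{-l} for r,s > 0. Then for any points 0 < r_1 < r_2 < … < r_N, the N×N matrix (K_l(r_i, r_j))_{i,j} is positive semidefinite. -/
/-!
With `t = r ^ (2l + 1)`, which is increasing in `r` because `2l + 1 > 0`,
`K_l(r, s) = r ^ (-l) * min (t r) (t s) * s ^ (-l) / (2l + 1)`. So the kernel matrix is a positive
multiple of a diagonal congruence of the matrix `min (t i) (t j)`, and the latter is the Gram matrix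
of the indicators of `(0, t i]` in `L²(ℝ)`, since `λ((0, a] ∩ (0, b]) = min a b`.
-/

open Matrix Real MeasureTheory

theorem Matrix.posSemidef_of_min {ι : Type*} [Finite ι] {t : ι → ℝ} (ht : ∀ i, 0 ≤ t i) :
    (Matrix.of fun i j => min (t i) (t j)).PosSemidef := by
  convert posSemidef_matrix_measure_inter (μ := volume) (s := fun i => Set.Ioc 0 (t i))
    (fun _ => measurableSet_Ioc) (fun _ => measure_Ioc_lt_top.ne) using 2
  simp [Set.Ioc_inter_Ioc, ht]

theorem Matrix.PosSemidef.diagonal_mul_mul_diagonal {ι R : Type*} [Fintype ι] [DecidableEq ι]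
    [CommRing R] [PartialOrder R] [StarRing R] [StarOrderedRing R] {A : Matrix ι ι R}
    (hA : A.PosSemidef) (d : ι → R) :
    (Matrix.of fun i j => star (d i) * A i j * d j).PosSemidef := by
  convert hA.conjTranspose_mul_mul_same (diagonal d) using 1
  ext i j
  simp [diagonal_conjTranspose, diagonal_mul, mul_diagonal]

/-- For `r ≤ s` both sides equal `r ^ (l + 1) * s ^ (-l)`. -/
theorem Real.min_rpow_add_one_mul_max_rpow_neg {l r s : ℝ} (hl : 0 ≤ 2 * l + 1)
    (hr : 0 < r) (hs : 0 < s) :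
    min r s ^ (l + 1) * max r s ^ (-l) =
      r ^ (-l) * min (r ^ (2 * l + 1)) (s ^ (2 * l + 1)) * s ^ (-l) := by
  wlog hrs : r ≤ s generalizing r s
  · rw [min_comm, max_comm, this hs hr (le_of_not_ge hrs), min_comm]
    ring
  rw [min_eq_left hrs, max_eq_right hrs, min_eq_left (rpow_le_rpow hr.le hrs hl), ← rpow_add hr]
  ring_nf

theorem bessel_kernel_posSemidef_general {N : ℕ} (l : ℝ) (hl : -1/2 < l)
    (r : Fin N → ℝ) (hr : ∀ i, 0 < r i) :
    (Matrix.of fun i j =>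
        (min (r i) (r j)) ^ (l + 1) * (max (r i) (r j)) ^ (-l) / (2 * l + 1)
      : Matrix (Fin N) (Fin N) ℝ).PosSemidef := by
  have h2l : 0 < 2 * l + 1 := by linarith
  have hmin := (posSemidef_of_min fun i => (rpow_pos_of_pos (hr i) (2 * l + 1)).le)
    |>.diagonal_mul_mul_diagonal fun i => r i ^ (-l)
  have hkernel : (Matrix.of fun i j =>
        (min (r i) (r j)) ^ (l + 1) * (max (r i) (r j)) ^ (-l) / (2 * l + 1)
      : Matrix (Fin N) (Fin N) ℝ) = (2 * l + 1)⁻¹ • Matrix.of fun i j =>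
        star (r i ^ (-l)) * min (r i ^ (2 * l + 1)) (r j ^ (2 * l + 1)) * r j ^ (-l) := by
    ext i j
    rw [of_apply, Matrix.smul_apply, of_apply, star_trivial,
      ← min_rpow_add_one_mul_max_rpow_neg h2l.le (hr i) (hr j), smul_eq_mul]
    ring
  exact hkernel ▸ hmin.smul (inv_nonneg.2 h2l.le)

/-- The zero-energy Green function of the Bessel operator,
`K_l(r,s) = min(r,s)^{l+1} max(r,s)^{-l} / (2l+1)`, restricted to any finite
family of points `0 < r₁ < ⋯ < r_N`, yields a positive semidefinite matrix. -/
theorem bessel_kernel_posSemidef {N : ℕ} (l : ℝ) (hl : -1/2 < l)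
    (r : Fin N → ℝ) (hr : ∀ i, 0 < r i) (hmono : StrictMono r) :
    (Matrix.of fun i j =>
        (min (r i) (r j)) ^ (l + 1) * (max (r i) (r j)) ^ (-l) / (2 * l + 1)
      : Matrix (Fin N) (Fin N) ℝ).PosSemidef :=
  bessel_kernel_posSemidef_general l hl r hr
end

section
/- Let l ≥ -1/2, 0 < r_1 < … < r_N, and α_1,…,α_N < 0. If for every k one has (2l+1)/|α_k| ≥ Σ_{j<k} r_j^{l+1}/r_k^l + r_k Σ_{j≥k} (r_k/r_j)^l, then the matrix M with diagonal entries (2l+1)/α_k + r_k and off-diagonal entries M_{jk} = r_{min(j,k)}^{l+1} r_{max(j,k)}^{-l} has no positive eigenvalues (is negative semidefinite). -/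
/-!
The negated matrix `-M` is symmetric, and the hypothesis says exactly that each of its diagonal
entries `(2l+1)/|α_k| - r_k` dominates the absolute sum of the other entries in its column.
By Gershgorin's circle theorem every eigenvalue of `-M` lies in a disc centred at such a
diagonal entry of radius at most that entry, hence is nonnegative.
-/

open Finset Matrix Real

open scoped ComplexOrder in
theorem Matrix.IsHermitian.posSemidef_of_sum_norm_le_re_diag {𝕜 n : Type*} [RCLike 𝕜]
    [Fintype n] [DecidableEq n] {A : Matrix n n 𝕜} (hA : A.IsHermitian)
    (h : ∀ k, ∑ j ∈ univ.erase k, ‖A j k‖ ≤ RCLike.re (A k k)) : A.PosSemidef := by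
  rw [hA.posSemidef_iff_eigenvalues_nonneg]
  intro i
  change 0 ≤ hA.eigenvalues i
  set μ := hA.eigenvalues i
  have hμ : Module.End.HasEigenvalue (toLin' A) (μ : 𝕜) := by
    refine Module.End.hasEigenvalue_of_hasEigenvector (x := ⇑(hA.eigenvectorBasis i)) ⟨?_, ?_⟩
    · rw [Module.End.mem_eigenspace_iff, toLin'_apply, hA.mulVec_eigenvectorBasis,
        RCLike.real_smul_eq_coe_smul (K := 𝕜)]
    · simpa using hA.eigenvectorBasis.orthonormal.ne_zero i
  obtain ⟨k, hk⟩ := eigenvalue_mem_ball hμ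
  rw [mem_closedBall_iff_norm] at hk
  have hrow : ∑ j ∈ univ.erase k, ‖A k j‖ = ∑ j ∈ univ.erase k, ‖A j k‖ :=
    sum_congr rfl fun j _ => by rw [← hA.apply j k, norm_star]
  have hre : RCLike.re (A k k) - μ ≤ ‖(μ : 𝕜) - A k k‖ :=
    calc RCLike.re (A k k) - μ = RCLike.re (A k k - μ) := by simp
      _ ≤ ‖A k k - μ‖ := RCLike.re_le_norm _
      _ = ‖(μ : 𝕜) - A k k‖ := norm_sub_rev _ _
  linarith [h k]

theorem Finset.sum_erase_eq_sum_Iio_add_sum_Ioi {ι M : Type*} [Fintype ι] [LinearOrder ι]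
    [LocallyFiniteOrderBot ι] [LocallyFiniteOrderTop ι] [AddCommMonoid M] (f : ι → M) (k : ι) :
    ∑ j ∈ univ.erase k, f j = ∑ j ∈ Iio k, f j + ∑ j ∈ Ioi k, f j := by
  rw [← sum_union (disjoint_left.2 fun j hj hj' => (mem_Iio.1 hj).asymm (mem_Ioi.1 hj'))]
  congr 1
  ext j
  simp [lt_or_lt_iff_ne]

theorem Real.min_rpow_mul_max_rpow_neg_of_le {a b : ℝ} (l : ℝ) (ha : 0 < a) (hab : a ≤ b) :
    min a b ^ (l + 1) * max a b ^ (-l) = a ^ (l + 1) / b ^ l := by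
  rw [min_eq_left hab, max_eq_right hab, rpow_neg (ha.le.trans hab), div_eq_mul_inv]

theorem Real.min_rpow_mul_max_rpow_neg_of_ge {a b : ℝ} (l : ℝ) (hb : 0 < b) (hba : b ≤ a) :
    min a b ^ (l + 1) * max a b ^ (-l) = b * (b / a) ^ l := by
  rw [min_eq_right hba, max_eq_left hba, div_rpow hb.le (hb.trans_le hba).le,
    rpow_neg (hb.trans_le hba).le, rpow_add hb, rpow_one]
  ring

theorem gershgorin_delta_no_bound_states_general {N : ℕ} (l : ℝ)
    (r α : Fin N → ℝ) (hr : ∀ i, 0 < r i) (hmono : StrictMono r)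
    (hα : ∀ k, α k < 0)
    (h : ∀ k : Fin N,
      (2 * l + 1) / |α k| ≥
        (∑ j ∈ Finset.univ.filter fun j => j < k, r j ^ (l + 1) / r k ^ l)
          + r k * ∑ j ∈ Finset.univ.filter fun j => k ≤ j, (r k / r j) ^ l) :
    (-(Matrix.of fun j k =>
        if j = k then (2 * l + 1) / α k + r k
        else (min (r j) (r k)) ^ (l + 1) * (max (r j) (r k)) ^ (-l)
      : Matrix (Fin N) (Fin N) ℝ)).PosSemidef := by
  set M : Matrix (Fin N) (Fin N) ℝ := Matrix.of fun j k =>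
    if j = k then (2 * l + 1) / α k + r k
    else (min (r j) (r k)) ^ (l + 1) * (max (r j) (r k)) ^ (-l)
  refine IsHermitian.posSemidef_of_sum_norm_le_re_diag ?_ fun k => ?_
  · refine IsHermitian.ext fun j k => ?_
    rcases eq_or_ne j k with rfl | hjk
    · rfl
    · simp [M, hjk, hjk.symm, min_comm, max_comm]
  have hoff : ∀ j ≠ k, ‖(-M) j k‖ = min (r j) (r k) ^ (l + 1) * max (r j) (r k) ^ (-l) := by
    intro j hjk
    have hrj := hr j
    have hrk := hr k
    simp only [M, Matrix.neg_apply, of_apply, if_neg hjk, norm_neg, Real.norm_eq_abs]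
    exact abs_of_nonneg (by positivity)
  have hdiag : RCLike.re ((-M) k k) = (2 * l + 1) / |α k| - r k := by
    simp only [M, Matrix.neg_apply, of_apply, ↓reduceIte, RCLike.re_to_real,
      abs_of_neg (hα k), div_neg]
    ring
  have hk := h k
  -- the `j = k` term of the second sum is the `r_k` of the diagonal entry
  rw [filter_gt_eq_Iio, filter_le_eq_Ici, Ici_eq_cons_Ioi, sum_cons, div_self (hr k).ne',
    one_rpow, mul_add, mul_one, mul_sum] at hk
  rw [sum_erase_eq_sum_Iio_add_sum_Ioi, hdiag,
    sum_congr rfl fun j hj => (hoff j (mem_Iio.1 hj).ne).trans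
      (min_rpow_mul_max_rpow_neg_of_le l (hr j) (hmono (mem_Iio.1 hj)).le),
    sum_congr rfl fun j hj => (hoff j (mem_Ioi.1 hj).ne').trans
      (min_rpow_mul_max_rpow_neg_of_ge l (hr k) (hmono (mem_Ioi.1 hj)).le)]
  linarith

/-- Gershgorin positivity criterion for δ-interaction matrices: let `l ≥ -1/2`,
`0 < r₁ < ⋯ < r_N`, `α_k < 0`.  If for every `k`
`(2l+1)/|α_k| ≥ ∑_{j<k} r_j^{l+1}/r_k^l + r_k ∑_{j≥k} (r_k/r_j)^l`,
then the matrix `M` with `M k k = (2l+1)/α_k + r_k` and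
`M j k = r_{min(j,k)}^{l+1} r_{max(j,k)}^{-l}` (for `j ≠ k`) is
negative semidefinite. -/
theorem gershgorin_delta_no_bound_states {N : ℕ} (l : ℝ) (hl : -1/2 ≤ l)
    (r α : Fin N → ℝ) (hr : ∀ i, 0 < r i) (hmono : StrictMono r)
    (hα : ∀ k, α k < 0)
    (h : ∀ k : Fin N,
      (2 * l + 1) / |α k| ≥
        (∑ j ∈ Finset.univ.filter fun j => j < k, r j ^ (l + 1) / r k ^ l)
          + r k * ∑ j ∈ Finset.univ.filter fun j => k ≤ j, (r k / r j) ^ l) :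
    (-(Matrix.of fun j k =>
        if j = k then (2 * l + 1) / α k + r k
        else (min (r j) (r k)) ^ (l + 1) * (max (r j) (r k)) ^ (-l)
      : Matrix (Fin N) (Fin N) ℝ)).PosSemidef :=
  gershgorin_delta_no_bound_states_general l r α hr hmono hα h
end

section
/- For l > -1/2 and any f ∈ C_c^∞(0,∞), the pointwise bound |f(r)|² ≤ (r/(2l+1)) · (∫₀^∞ |f'(t)|² dt + l(l+1) ∫₀^∞ |f(t)|²/t² dt) holds for every r > 0. -/
open Real MeasureTheory Set
open Filter

lemma my_sq_supp {h : ℝ → ℝ} (hs : HasCompactSupport h) :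
    HasCompactSupport (fun t => (h t)^2) := by
  apply hs.mono'
  intro t ht
  simp only [Function.mem_support] at ht
  have : h t ≠ 0 := fun h0 => ht (by simp [h0])
  exact subset_tsupport _ this

lemma my_mul_supp {h g : ℝ → ℝ} (hs : HasCompactSupport h) :
    HasCompactSupport (fun t => g t * h t) := by
  apply hs.mono'
  intro t ht
  simp only [Function.mem_support] at ht
  have : h t ≠ 0 := fun h0 => ht (by simp [h0])
  exact subset_tsupport _ this

lemma my_cs {μ : Measure ℝ} {W G : ℝ → ℝ}
    (hW2 : Integrable (fun t => (W t)^2) μ) (hG2 : Integrable (fun t => (G t)^2) μ)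
    (hWG : Integrable (fun t => W t * G t) μ) (hpos : 0 < ∫ t, (W t)^2 ∂μ) :
    (∫ t, W t * G t ∂μ)^2 ≤ (∫ t, (W t)^2 ∂μ) * ∫ t, (G t)^2 ∂μ := by
  set A := ∫ t, (W t)^2 ∂μ with hA'
  set B := ∫ t, W t * G t ∂μ with hB'
  set C := ∫ t, (G t)^2 ∂μ with hC'
  set lam := B / A with hlam
  have key : 0 ≤ lam^2 * A - 2 * lam * B + C := by
    have h : (∫ t, (lam * W t - G t)^2 ∂μ) = lam^2 * A - 2 * lam * B + C := by
      have e : (fun t => (lam * W t - G t)^2)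
          = fun t => (lam^2 * (W t)^2 - 2 * lam * (W t * G t)) + (G t)^2 := by
        funext t; ring
      have hi1 : Integrable (fun t => lam ^ 2 * (W t)^2 - 2 * lam * (W t * G t)) μ :=
        (hW2.const_mul _).sub (hWG.const_mul _)
      rw [e, integral_add hi1 hG2,
        integral_sub (hW2.const_mul _) (hWG.const_mul _), integral_const_mul,
        integral_const_mul]
    rw [← h]
    exact integral_nonneg fun t => sq_nonneg _
  have hA : A ≠ 0 := ne_of_gt hpos
  have h1 : lam^2 * A = B^2 / A := by rw [hlam, div_pow, sq A, ← div_div, div_mul_cancel₀ _ hA]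
  have h2 : 2 * lam * B = 2 * B^2 / A := by rw [hlam]; ring
  rw [h1, h2] at key
  have h3 : A * (B^2/A - 2*B^2/A + C) = A * C - B^2 := by field_simp; ring
  nlinarith [mul_nonneg hpos.le key]

/-- Reproducing-kernel (Green function diagonal) bound for the zero-energy
Bessel form: for `l > -1/2` and `f ∈ C_c^∞(0,∞)`,
`|f(r)|² ≤ (r/(2l+1)) (∫₀^∞ |f'|² dt + l(l+1) ∫₀^∞ |f|²/t² dt)` for all `r > 0`. -/
theorem bessel_kernel_pointwise_bound (l : ℝ) (hl : -1/2 < l)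
    (f : ℝ → ℝ) (hf : ContDiff ℝ (⊤ : ℕ∞) f) (hsupp : HasCompactSupport f)
    (hsupp' : tsupport f ⊆ Set.Ioi (0 : ℝ)) :
    ∀ r : ℝ, 0 < r →
      (f r) ^ 2 ≤ (r / (2 * l + 1)) *
        ((∫ t in Set.Ioi (0 : ℝ), (deriv f t) ^ 2)
          + l * (l + 1) * ∫ t in Set.Ioi (0 : ℝ), (f t) ^ 2 / t ^ 2) := by
  intro r hr
  -- a lower bound for the support
  obtain ⟨a, ha0, haK⟩ : ∃ a : ℝ, 0 < a ∧ tsupport f ⊆ Ici a := by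
    rcases eq_empty_or_nonempty (tsupport f) with h | h
    · exact ⟨1, one_pos, by simp [h]⟩
    · refine ⟨sInf (tsupport f), hsupp' (hsupp.isCompact.sInf_mem h), fun x hx => ?_⟩
      exact csInf_le hsupp.isCompact.bddBelow hx
  obtain ⟨b, hb⟩ := hsupp.isCompact.bddAbove
  have hfb : ∀ t, b < t → f t = 0 := fun t ht =>
    image_eq_zero_of_notMem_tsupport (fun h => absurd (hb h) ht.not_ge)
  set d := a / 2 with hdd
  have hd0 : 0 < d := by positivity
  have hda : d < a := by simp [hdd]; linarith
  have hf0 : ∀ t, t < a → f t = 0 := fun t ht =>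
    image_eq_zero_of_notMem_tsupport (fun h => absurd (haK h) (by simpa using ht.not_ge))
  have hD0 : ∀ t, t < a → deriv f t = 0 := by
    intro t ht
    have he : f =ᶠ[nhds t] (fun _ => (0:ℝ)) :=
      eventually_of_mem (Iio_mem_nhds ht) (fun s hs => hf0 s hs)
    rw [he.deriv_eq, deriv_const]
  set c := l + 1 with hcc
  have hc : 1/2 < c := by simp [hcc]; linarith
  set D := deriv f with hD
  have hDc : Continuous D := hf.continuous_deriv (by simp)
  set q : ℝ → ℝ := fun t => f t / max t d with hqdef
  have hmaxpos : ∀ t : ℝ, 0 < max t d := fun t => lt_of_lt_of_le hd0 (le_max_right t d)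
  have hqc : Continuous q :=
    hf.continuous.div (continuous_id.max continuous_const) (fun t => (hmaxpos t).ne')
  have hmax_eq : ∀ t : ℝ, f t ≠ 0 → max t d = t := by
    intro t ht
    have : t ∈ tsupport f := subset_tsupport f ht
    exact max_eq_left (le_trans hda.le (haK this))
  have hq : ∀ t, f t / t = q t := by
    intro t
    by_cases ht : f t = 0
    · simp [hqdef, ht]
    · simp only [hqdef]; rw [hmax_eq t ht]
  have hq2 : ∀ t, (f t)^2 / t^2 = (q t)^2 := by
    intro t; rw [← div_pow, hq t]
  set G : ℝ → ℝ := fun t => D t - c * q t with hGdef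
  have hGc : Continuous G := hDc.sub (continuous_const.mul hqc)
  -- compact supports
  have hsq : HasCompactSupport q := by
    apply hsupp.mono'
    intro t ht
    simp only [hqdef, Function.mem_support] at ht
    have : f t ≠ 0 := fun h => ht (by simp [h])
    exact subset_tsupport f this
  have hsD : HasCompactSupport D := hsupp.mono' support_deriv_subset
  have hsG : HasCompactSupport G := by
    apply hsupp.mono'
    intro t ht
    simp only [hGdef, Function.mem_support] at ht
    by_contra hne
    have h1 : f t = 0 := image_eq_zero_of_notMem_tsupport hne
    have h2 : D t = 0 := by
      by_contra hD2
      exact hne (support_deriv_subset (Function.mem_support.2 hD2))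
    apply ht
    simp [h1, h2, hqdef]
  -- integrabilities on Ioi 0
  have intD2 : IntegrableOn (fun t => (D t)^2) (Ioi (0:ℝ)) :=
    ((hDc.pow 2).integrable_of_hasCompactSupport (my_sq_supp hsD)).integrableOn
  have intq2 : IntegrableOn (fun t => (q t)^2) (Ioi (0:ℝ)) :=
    ((hqc.pow 2).integrable_of_hasCompactSupport (my_sq_supp hsq)).integrableOn
  have intG2 : IntegrableOn (fun t => (G t)^2) (Ioi (0:ℝ)) :=
    ((hGc.pow 2).integrable_of_hasCompactSupport (my_sq_supp hsG)).integrableOn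
  have intDq : IntegrableOn (fun t => D t * q t) (Ioi (0:ℝ)) :=
    ((hDc.mul hqc).integrable_of_hasCompactSupport (my_mul_supp hsq)).integrableOn
  -- Step A : integration by parts identity
  set P : ℝ → ℝ := fun t => (f t)^2 / max t d with hPdef
  set phi : ℝ → ℝ := fun t => 2 * (D t * q t) - (q t)^2 with hphidef
  have intphi : IntegrableOn phi (Ioi (0:ℝ)) := (intDq.const_mul 2).sub intq2
  have hP_deriv : ∀ t ∈ Ioi (0:ℝ), HasDerivAt P (phi t) t := by
    intro t ht
    simp only [mem_Ioi] at ht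
    rcases lt_or_ge t a with h | h
    · have hPe : P =ᶠ[nhds t] (fun _ => (0:ℝ)) :=
        eventually_of_mem (Iio_mem_nhds h) (fun s hs => by simp [hPdef, hf0 s hs])
      have h0 : HasDerivAt P 0 t := (hasDerivAt_const t (0:ℝ)).congr_of_eventuallyEq hPe
      have hz : phi t = 0 := by simp [hphidef, hqdef, hf0 t h, hD0 t h]
      rw [hz]; exact h0
    · have htd : d < t := lt_of_lt_of_le hda h
      have ht0 : (0:ℝ) < t := ht
      have hft : HasDerivAt f (D t) t := (hf.differentiable (by simp) t).hasDerivAt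
      have h2 := (hft.pow 2).mul (hasDerivAt_inv ht0.ne')
      have hPe : P =ᶠ[nhds t] (fun s => (f s)^2 * s⁻¹) :=
        eventually_of_mem (Ioi_mem_nhds htd) (fun s hs => by
          simp only [hPdef]
          rw [max_eq_left (le_of_lt hs), div_eq_mul_inv])
      have h3 := h2.congr_of_eventuallyEq hPe
      refine h3.congr_deriv (Eq.symm ?_)
      have hqt : q t = f t / t := (hq t).symm
      simp only [hphidef, hqt, Pi.pow_apply]
      field_simp
      ring
  have hPtend : Tendsto P atTop (nhds (0:ℝ)) := by
    have he : P =ᶠ[atTop] (fun _ => (0:ℝ)) :=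
      eventually_atTop.2 ⟨b+1, fun t ht => by simp [hPdef, hfb t (by linarith)]⟩
    exact tendsto_const_nhds.congr' he.symm
  have hPcont : Continuous P :=
    (hf.continuous.pow 2).div (continuous_id.max continuous_const) (fun t => (hmaxpos t).ne')
  have hphint0 : ∫ t in Ioi (0:ℝ), phi t = 0 := by
    have h := integral_Ioi_of_hasDerivAt_of_tendsto
      hPcont.continuousWithinAt hP_deriv intphi hPtend
    rw [h]
    simp [hPdef, hf0 0 ha0]
  have hA : ∫ t in Ioi (0:ℝ), (G t)^2
      = (∫ t in Ioi (0:ℝ), (D t)^2) + l * (l+1) * ∫ t in Ioi (0:ℝ), (q t)^2 := by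
    have e : (fun t => (G t)^2)
        = fun t => ((D t)^2 - c * phi t) + (c^2 - c) * (q t)^2 := by
      funext t; simp only [hGdef, hphidef]; ring
    have hi1 : IntegrableOn (fun t => (D t)^2 - c * phi t) (Ioi (0:ℝ)) :=
      intD2.sub (intphi.const_mul c)
    have hi2 : IntegrableOn (fun t => (c^2 - c) * (q t)^2) (Ioi (0:ℝ)) :=
      intq2.const_mul _
    rw [e, integral_add hi1 hi2, integral_sub intD2 (intphi.const_mul c),
      integral_const_mul, integral_const_mul, hphint0]
    have hc2 : c^2 - c = l * (l+1) := by simp only [hcc]; ring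
    rw [hc2]; ring
  -- Step B : FTC on (r, ∞)
  set W : ℝ → ℝ := fun t => (max t r) ^ (-c) with hWdef
  have hrmax : ∀ t : ℝ, 0 < max t r := fun t => lt_of_lt_of_le hr (le_max_right t r)
  have hWc : Continuous W := (continuous_id.max continuous_const).rpow_const
      (fun t => Or.inl (hrmax t).ne')
  have intWG : IntegrableOn (fun t => W t * G t) (Ioi r) :=
    ((hWc.mul hGc).integrable_of_hasCompactSupport (my_mul_supp hsG)).integrableOn
  have intG2r : IntegrableOn (fun t => (G t)^2) (Ioi r) :=
    ((hGc.pow 2).integrable_of_hasCompactSupport (my_sq_supp hsG)).integrableOn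
  have hW2eq : ∀ t ∈ Ioi r, t ^ (-(2*c)) = (W t)^2 := by
    intro t ht
    have ht' : r < t := ht
    have ht0 : 0 < t := hr.trans ht'
    simp only [hWdef, max_eq_left (le_of_lt ht')]
    rw [sq, ← Real.rpow_add ht0, show (-c + -c : ℝ) = -(2*c) by ring]
  have intW2 : IntegrableOn (fun t => (W t)^2) (Ioi r) :=
    (integrableOn_Ioi_rpow_of_lt (show (-(2*c) : ℝ) < -1 by linarith) hr).congr_fun
      (fun t ht => hW2eq t ht) measurableSet_Ioi
  have hW2val : ∫ t in Ioi r, (W t)^2 = r ^ (-(2*c)+1) / (2*c-1) := by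
    rw [← setIntegral_congr_fun measurableSet_Ioi (fun t ht => hW2eq t ht),
      integral_Ioi_rpow_of_lt (show (-(2*c) : ℝ) < -1 by linarith) hr,
      show (-(2*c)+1 : ℝ) = -(2*c-1) by ring]
    rw [show (-(2*c-1) : ℝ) = -(2*c-1) by rfl]
    rw [neg_div, ← div_neg]
    ring_nf
  have hW2pos : 0 < ∫ t in Ioi r, (W t)^2 := by
    rw [hW2val]
    have := Real.rpow_pos_of_pos hr (-(2*c)+1)
    apply div_pos this (by linarith)
  set F : ℝ → ℝ := fun t => f t * (max t r) ^ (-c) with hFdef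
  have hFc : Continuous F := hf.continuous.mul hWc
  have hFtend : Tendsto F atTop (nhds (0:ℝ)) := by
    have he : F =ᶠ[atTop] (fun _ => (0:ℝ)) :=
      eventually_atTop.2 ⟨b+1, fun t ht => by simp [hFdef, hfb t (by linarith)]⟩
    exact tendsto_const_nhds.congr' he.symm
  have hF_deriv : ∀ t ∈ Ioi r, HasDerivAt F (W t * G t) t := by
    intro t ht
    simp only [mem_Ioi] at ht
    have ht0 : 0 < t := hr.trans ht
    have hft : HasDerivAt f (D t) t := (hf.differentiable (by simp) t).hasDerivAt
    have hrp : HasDerivAt (fun s : ℝ => s ^ (-c)) (-c * t ^ (-c - 1)) t :=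
      Real.hasDerivAt_rpow_const (Or.inl ht0.ne')
    have hmul := hft.mul hrp
    have hFe : F =ᶠ[nhds t] (fun s => f s * s ^ (-c)) :=
      eventually_of_mem (Ioi_mem_nhds ht) (fun s hs => by
        simp only [hFdef]
        rw [max_eq_left (le_of_lt hs)])
    have h3 := hmul.congr_of_eventuallyEq hFe
    refine h3.congr_deriv (Eq.symm ?_)
    have hqt : q t = f t / t := (hq t).symm
    simp only [hWdef, hGdef, hqt, max_eq_left (le_of_lt ht)]
    rw [show (-c - 1 : ℝ) = -c + (-1) by ring, Real.rpow_add ht0, Real.rpow_neg_one]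
    field_simp
    ring
  have hIoir := integral_Ioi_of_hasDerivAt_of_tendsto
    hFc.continuousWithinAt hF_deriv intWG hFtend
  set I := ∫ t in Ioi r, W t * G t with hI
  have hFr : F r = f r * r ^ (-c) := by simp [hFdef]
  have hfrI : f r = -(I * r ^ c) := by
    have h1 : I = -(f r * r ^ (-c)) := by rw [hIoir, hFr]; ring
    have h2 : r ^ (-c) * r ^ c = 1 := by
      rw [← Real.rpow_add hr]; simp
    calc f r = f r * (r^(-c) * r^c) := by rw [h2]; ring
      _ = -(I * r^c) := by rw [h1]; ring
  have hsqr : (f r)^2 = I^2 * (r^c)^2 := by rw [hfrI]; ring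
  have hCS : I^2 ≤ (∫ t in Ioi r, (W t)^2) * ∫ t in Ioi r, (G t)^2 :=
    my_cs intW2 intG2r intWG hW2pos
  have hGmono : ∫ t in Ioi r, (G t)^2 ≤ ∫ t in Ioi (0:ℝ), (G t)^2 :=
    setIntegral_mono_set intG2 (Eventually.of_forall fun t => sq_nonneg _)
      (HasSubset.Subset.eventuallyLE (Ioi_subset_Ioi hr.le))
  have h2l : (0:ℝ) < 2*l+1 := by linarith
  have hpow : (r^c)^2 * r^(-(2*c)+1) = r := by
    rw [sq, ← Real.rpow_add hr, ← Real.rpow_add hr,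
      show (c + c + (-(2*c)+1) : ℝ) = 1 by ring, Real.rpow_one]
  have hGnn : 0 ≤ ∫ t in Ioi r, (G t)^2 := integral_nonneg fun t => sq_nonneg _
  have hfinal : (f r)^2 ≤ (r / (2*l+1)) * ∫ t in Ioi (0:ℝ), (G t)^2 := by
    rw [hsqr]
    calc I^2 * (r^c)^2
        ≤ ((∫ t in Ioi r, (W t)^2) * ∫ t in Ioi r, (G t)^2) * (r^c)^2 :=
          mul_le_mul_of_nonneg_right hCS (sq_nonneg _)
      _ = ((r^c)^2 * r^(-(2*c)+1)) / (2*c-1) * ∫ t in Ioi r, (G t)^2 := by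
          rw [hW2val]; ring
      _ = r / (2*l+1) * ∫ t in Ioi r, (G t)^2 := by
          rw [hpow, show (2*c-1 : ℝ) = 2*l+1 by simp only [hcc]; ring]
      _ ≤ r / (2*l+1) * ∫ t in Ioi (0:ℝ), (G t)^2 :=
          mul_le_mul_of_nonneg_left hGmono (by positivity)
  rw [hA] at hfinal
  simpa only [hq2] using hfinal
end
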